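/- arXiv:2402.13841 — 5 statements merged into one kernel-verified Lean document; each statement's English description precedes it below -/
import Mathlib

section
/- For every real p with 0 < p ≤ 1, the function d ↦ (1 - p/d)^(d-1) is strictly monotone decreasing on the positive integers; i.e., for all natural numbers d ≥ 1, (1 - p/(d+1))^d < (1 - p/d)^(d-1). -/
/-!
Write `a = 1 - p/(n+2)` and `b = 1 - p/(n+1)`, so that the claim for `d = n + 1` is
`a^(n+1) < b^n`, i.e. `a < (b/a)^n`. Bernoulli's inequality bounds `(b/a)^n` below by
`1 + n (b/a - 1)`, and `a < 1 + n (b/a - 1)` reduces to the explicit identity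
`a + n (b - a) - a² = p (n + 2 - p (n + 1)) / ((n + 1) (n + 2)²)`, positive for `0 < p ≤ 1`.
-/

lemma pow_succ_lt_pow_of_mul_self_lt {a b : ℝ} (n : ℕ) (ha : 0 < a) (hb : 0 ≤ b)
    (h : a * a < a + n * (b - a)) : a ^ (n + 1) < b ^ n := by
  have bernoulli : 1 + n * (b / a - 1) ≤ (b / a) ^ n := by
    simpa using one_add_mul_le_pow (by linarith [div_nonneg hb ha.le] : (-2 : ℝ) ≤ b / a - 1) n
  have key : a < 1 + n * (b / a - 1) := by
    rw [show 1 + n * (b / a - 1) = (a + n * (b - a)) / a by field_simp, lt_div_iff₀ ha]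
    exact h
  calc a ^ (n + 1) = a * a ^ n := pow_succ' a n
    _ < (b / a) ^ n * a ^ n := mul_lt_mul_of_pos_right (key.trans_le bernoulli) (pow_pos ha n)
    _ = b ^ n := by rw [← mul_pow, div_mul_cancel₀ _ ha.ne']

lemma one_sub_div_mul_self_lt {p : ℝ} (hp0 : 0 < p) (hp1 : p ≤ 1) (n : ℕ) :
    (1 - p / (n + 2)) * (1 - p / (n + 2)) <
      1 - p / (n + 2) + n * ((1 - p / (n + 1)) - (1 - p / (n + 2))) := by
  have identity : 1 - p / (n + 2) + n * ((1 - p / (n + 1)) - (1 - p / (n + 2)))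
      - (1 - p / (n + 2)) * (1 - p / (n + 2))
      = p * (n + 2 - p * (n + 1)) / ((n + 1) * (n + 2) ^ 2) := by
    field_simp
    ring
  have hgap : 0 < n + 2 - p * (n + 1) := by nlinarith
  have : 0 < p * (n + 2 - p * (n + 1)) / ((n + 1) * (n + 2) ^ 2) := by positivity
  linarith

/-- For `0 < p ≤ 1`, the map `d ↦ (1 - p/d)^(d-1)` is strictly decreasing on positive integers. -/
theorem monotone_decreasing_one_sub_div_pow_pred
    (p : ℝ) (hp0 : 0 < p) (hp1 : p ≤ 1) :
    ∀ d : ℕ, 1 ≤ d → (1 - p / (d + 1 : ℕ)) ^ d < (1 - p / d) ^ (d - 1) := by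
  intro d hd
  obtain ⟨n, rfl⟩ : ∃ n, d = n + 1 := ⟨d - 1, by omega⟩
  have ha : 0 < 1 - p / (n + 2) := by
    rw [sub_pos, div_lt_one (by positivity)]
    linarith
  have hb : 0 ≤ 1 - p / (n + 1) := by
    rw [sub_nonneg, div_le_one (by positivity)]
    linarith [(n.cast_nonneg : (0 : ℝ) ≤ n)]
  have := pow_succ_lt_pow_of_mul_self_lt n ha hb (one_sub_div_mul_self_lt hp0 hp1 n)
  push_cast
  simpa [add_assoc, one_add_one_eq_two] using this
end

section
/- For every real p with 0 < p < 1, the function d ↦ (1 - p/(d-1))^d is strictly monotone increasing for integers d ≥ 2; i.e., for all natural numbers d ≥ 2, (1 - p/(d-1))^d < (1 - p/d)^(d+1). -/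
/-!
Writing `x = d`, the ratio of consecutive terms factors as
`1 - p/(x-1) = (1 - p/x) (1 - t)` with `t = p/((x-1)(x-p)) ∈ (0, 1]`, so it suffices to show
`(1 - t)^d < 1 - p/x`. Bernoulli's inequality gives `(1 - t)^d (1 + d t) ≤ (1 - t^2)^d ≤ 1`,
while `(1 - p/x)(1 + x t) = 1 + p/(x(x-1)) > 1`.
-/

theorem one_sub_pow_mul_one_add_mul_le_one {R : Type*} [CommRing R] [LinearOrder R]
    [IsStrictOrderedRing R] {t : R} (ht₀ : -1 ≤ t) (ht₁ : t ≤ 1) (n : ℕ) :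
    (1 - t) ^ n * (1 + n * t) ≤ 1 :=
  calc (1 - t) ^ n * (1 + n * t) ≤ (1 - t) ^ n * (1 + t) ^ n := by
        have : 0 ≤ 1 - t := sub_nonneg.2 ht₁
        gcongr
        exact one_add_mul_le_pow (by linarith) n
    _ = (1 - t ^ 2) ^ n := by rw [← mul_pow]; ring
    _ ≤ 1 := pow_le_one₀ (by nlinarith) (by nlinarith)

section Field

variable {K : Type*} [Field K] {p x : K}

theorem one_sub_div_sub_one_eq_mul (hx₀ : x ≠ 0) (hx₁ : x - 1 ≠ 0) (hxp : x - p ≠ 0) :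
    1 - p / (x - 1) = (1 - p / x) * (1 - p / ((x - 1) * (x - p))) := by
  field_simp
  ring

theorem one_sub_div_mul_one_add_mul_eq (hx₀ : x ≠ 0) (hx₁ : x - 1 ≠ 0) (hxp : x - p ≠ 0) :
    (1 - p / x) * (1 + x * (p / ((x - 1) * (x - p)))) = 1 + p / (x * (x - 1)) := by
  field_simp
  ring

end Field

theorem one_sub_div_pow_lt_one_sub_div {p : ℝ} (hp₀ : 0 < p) (hp₁ : p < 1) {d : ℕ}
    (hd : 2 ≤ d) :
    (1 - p / ((d - 1) * (d - p))) ^ d < 1 - p / d := by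
  have hx : (2 : ℝ) ≤ d := by exact_mod_cast hd
  have hx₁ : (0 : ℝ) < d - 1 := by linarith
  have hxp : (0 : ℝ) < d - p := by linarith
  set t := p / ((d - 1) * (d - p))
  have ht₀ : 0 ≤ t := by positivity
  have ht₁ : t ≤ 1 := (div_le_one (by positivity)).2 (by nlinarith)
  refine lt_of_mul_lt_mul_right ?_ (by positivity : (0 : ℝ) ≤ 1 + d * t)
  calc (1 - t) ^ d * (1 + d * t) ≤ 1 :=
        one_sub_pow_mul_one_add_mul_le_one (by linarith) ht₁ d
    _ < 1 + p / (d * (d - 1)) := by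
        have : 0 < p / (d * (d - 1)) := by positivity
        linarith
    _ = (1 - p / d) * (1 + d * t) :=
        (one_sub_div_mul_one_add_mul_eq (by positivity) hx₁.ne' hxp.ne').symm

/-- For `0 < p < 1`, the map `d ↦ (1 - p/(d-1))^d` is strictly increasing for integers `d ≥ 2`. -/
theorem monotone_increasing_one_sub_div_pred_pow
    (p : ℝ) (hp0 : 0 < p) (hp1 : p < 1) :
    ∀ d : ℕ, 2 ≤ d → (1 - p / ((d : ℝ) - 1)) ^ d < (1 - p / (d : ℝ)) ^ (d + 1) := by
  intro d hd
  have hx : (2 : ℝ) ≤ d := by exact_mod_cast hd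
  have hb : 0 < 1 - p / d := by
    rw [sub_pos, div_lt_one (by linarith)]
    linarith
  calc (1 - p / ((d : ℝ) - 1)) ^ d
        = (1 - p / d) ^ d * (1 - p / ((d - 1) * (d - p))) ^ d := by
        rw [one_sub_div_sub_one_eq_mul (by positivity) (by linarith) (by linarith), mul_pow]
    _ < (1 - p / d) ^ d * (1 - p / d) := by
        gcongr
        exact one_sub_div_pow_lt_one_sub_div hp0 hp1 hd
    _ = (1 - p / d) ^ (d + 1) := (pow_succ _ _).symm
end

section
/- For all reals p ∈ (0,1) and d ≥ 0, the second derivative with respect to d of the function f(d) = (1 - p/(d+1))^d is strictly positive; in particular f is strictly convex on [0, ∞). -/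
/-!
On `x > p - 1` the function is `exp ∘ g` with `g x = x * log (1 - p / (x + 1))`, so its second
derivative is `exp (g x) * (g' x ^ 2 + g'' x)`. A direct computation gives
`g'' x = p * ((2 - p) * x + 2 * (1 - p)) / ((x + 1) * (x + 1 - p)) ^ 2`, which is positive
for `0 < p < 1` and `x > p - 1`; strict convexity then follows from the second-derivative test.
-/

open Real Set Filter Topology

theorem iteratedDeriv_two_exp_comp {g g' : ℝ → ℝ} {x g'' : ℝ}
    (hg : ∀ᶠ y in 𝓝 x, HasDerivAt g (g' y) y) (hg' : HasDerivAt g' g'' x) :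
    iteratedDeriv 2 (fun y => exp (g y)) x = exp (g x) * (g' x ^ 2 + g'') := by
  have hderiv : deriv (fun y => exp (g y)) =ᶠ[𝓝 x] fun y => exp (g y) * g' y :=
    hg.mono fun y hy => hy.exp.deriv
  have hsecond : HasDerivAt (fun y => exp (g y) * g' y) (exp (g x) * g' x * g' x + exp (g x) * g'')
      x := hg.self_of_nhds.exp.mul hg'
  rw [iteratedDeriv_succ, iteratedDeriv_one, hderiv.deriv_eq, hsecond.deriv]
  ring

namespace OneSubDivRpow

variable (p : ℝ)

noncomputable def logFun (x : ℝ) : ℝ := x * log (1 - p / (x + 1))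

noncomputable def logFunDeriv (x : ℝ) : ℝ :=
  log (1 - p / (x + 1)) + p * x / ((x + 1) * (x + 1 - p))

noncomputable def logFunDeriv2 (x : ℝ) : ℝ :=
  p * ((2 - p) * x + 2 * (1 - p)) / ((x + 1) * (x + 1 - p)) ^ 2

variable {p} {x : ℝ}

theorem one_sub_div_pos (hx : 0 < x + 1) (hxp : p < x + 1) : 0 < 1 - p / (x + 1) := by
  rw [sub_pos, div_lt_one hx]
  exact hxp

theorem hasDerivAt_log_one_sub_div (hx : 0 < x + 1) (hxp : p < x + 1) :
    HasDerivAt (fun y => log (1 - p / (y + 1))) (p / ((x + 1) * (x + 1 - p))) x := by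
  have hquot : HasDerivAt (fun y => 1 - p / (y + 1)) (0 - (0 * (x + 1) - p * 1) / (x + 1) ^ 2) x :=
    (hasDerivAt_const x 1).sub ((hasDerivAt_const x p).div ((hasDerivAt_id' x).add_const 1) hx.ne')
  have hxp' : x + 1 - p ≠ 0 := by linarith
  refine (hquot.log (one_sub_div_pos hx hxp).ne').congr_deriv ?_
  field_simp
  ring

theorem hasDerivAt_logFun (hx : 0 < x + 1) (hxp : p < x + 1) :
    HasDerivAt (logFun p) (logFunDeriv p x) x := by
  refine ((hasDerivAt_id' x).mul (hasDerivAt_log_one_sub_div hx hxp)).congr_deriv ?_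
  rw [logFunDeriv]
  ring

theorem hasDerivAt_logFunDeriv (hx : 0 < x + 1) (hxp : p < x + 1) :
    HasDerivAt (logFunDeriv p) (logFunDeriv2 p x) x := by
  have hprod : (x + 1) * (x + 1 - p) ≠ 0 := mul_ne_zero hx.ne' (by linarith)
  have hrat : HasDerivAt (fun y => p * y / ((y + 1) * (y + 1 - p)))
      ((p * 1 * ((x + 1) * (x + 1 - p)) - p * x * (1 * (x + 1 - p) + (x + 1) * 1)) /
        ((x + 1) * (x + 1 - p)) ^ 2) x :=
    ((hasDerivAt_id' x).const_mul p).div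
      (((hasDerivAt_id' x).add_const 1).mul (((hasDerivAt_id' x).add_const 1).sub_const p)) hprod
  refine ((hasDerivAt_log_one_sub_div hx hxp).add hrat).congr_deriv ?_
  rw [logFunDeriv2]
  field_simp
  ring

theorem logFunDeriv2_pos (hp0 : 0 < p) (hp1 : p < 1) (hxp : p - 1 < x) :
    0 < logFunDeriv2 p x := by
  have hx : 0 < x + 1 := by linarith
  have hxp' : 0 < x + 1 - p := by linarith
  -- `(2 - p) * x + 2 * (1 - p) > (2 - p) * (p - 1) + 2 * (1 - p) = p * (1 - p)`
  have hlin : 0 < (2 - p) * x + 2 * (1 - p) := by nlinarith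
  unfold logFunDeriv2
  positivity

theorem rpow_eventuallyEq_exp_logFun (hp0 : 0 < p) (hxp : p - 1 < x) :
    (fun y : ℝ => (1 - p / (y + 1)) ^ y) =ᶠ[𝓝 x] fun y => exp (logFun p y) := by
  filter_upwards [isOpen_Ioi.mem_nhds hxp] with y hy
  rw [rpow_def_of_pos (one_sub_div_pos (by linarith [mem_Ioi.1 hy]) (by linarith [mem_Ioi.1 hy])),
    logFun, mul_comm]

end OneSubDivRpow

open OneSubDivRpow in
/-- For `0 < p < 1`, the function `f(d) = (1 - p/(d+1))^d` (real exponent) has strictly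
positive second derivative on `[0, ∞)`, and in particular is strictly convex there. -/
theorem second_deriv_pos_and_strictConvex
    (p : ℝ) (hp0 : 0 < p) (hp1 : p < 1) :
    (∀ d : ℝ, 0 ≤ d →
      0 < iteratedDeriv 2 (fun x : ℝ => (1 - p / (x + 1)) ^ x) d) ∧
    StrictConvexOn ℝ (Set.Ici (0 : ℝ)) (fun x : ℝ => (1 - p / (x + 1)) ^ x) := by
  have hlogFun : ∀ x ∈ Ioi (p - 1), HasDerivAt (logFun p) (logFunDeriv p x) x := fun x hx =>
    hasDerivAt_logFun (by linarith [mem_Ioi.1 hx]) (by linarith [mem_Ioi.1 hx])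
  have hpos : ∀ d : ℝ, 0 ≤ d → 0 < iteratedDeriv 2 (fun x : ℝ => (1 - p / (x + 1)) ^ x) d := by
    intro d hd
    have hdp : p - 1 < d := by linarith
    rw [(rpow_eventuallyEq_exp_logFun hp0 hdp).iteratedDeriv_eq,
      iteratedDeriv_two_exp_comp (eventually_of_mem (isOpen_Ioi.mem_nhds hdp) hlogFun)
        (hasDerivAt_logFunDeriv (by linarith) (by linarith))]
    have := logFunDeriv2_pos hp0 hp1 hdp
    positivity
  refine ⟨hpos, strictConvexOn_of_deriv2_pos' (convex_Ici 0) ?_ ?_⟩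
  · intro x hx
    have hxp : p - 1 < x := by linarith [mem_Ici.1 hx]
    exact ((hlogFun x hxp).exp.continuousAt.congr
      (rpow_eventuallyEq_exp_logFun hp0 hxp).symm).continuousWithinAt
  · intro x hx
    rw [← iteratedDeriv_eq_iterate]
    exact hpos x hx
end

section
/- For every real p with 0 < p < 1, the union over positive integers d of the closed intervals [ (1/(d+1))·(1 - p/d)^d , (1/d)·(1 - p/d)^(d-1) ] equals the half-open interval (0, 1]. In particular, consecutive intervals overlap: for every d ≥ 1, (1/(d+1))·(1 - p/d)^d < (1/(d+1))·(1 - p/(d+1))^d, and the left endpoints tend to 0 as d → ∞, while the right endpoint for d = 1 equals 1. -/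
open Filter

/-- Left endpoint of the `d`-regular equilibrium interval. -/
noncomputable def leftEnd (p : ℝ) (d : ℕ) : ℝ := (1 / ((d : ℝ) + 1)) * (1 - p / d) ^ d

/-- Right endpoint of the `d`-regular equilibrium interval. -/
noncomputable def rightEnd (p : ℝ) (d : ℕ) : ℝ := (1 / (d : ℝ)) * (1 - p / d) ^ (d - 1)

/-! Each interval reaches the next one, since `1 - p / d < 1 - p / (d + 1)`, while the right
endpoint of the `d`-th interval is at most `1 / d`. Starting from the first interval, whose right
endpoint is `1`, a point `x ∈ (0, 1]` therefore lies in the last interval whose right endpoint is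
still `≥ x`. -/

/-- Take `n + 1` to be the first index with `b (n + 1) < x`. -/
theorem exists_mem_Icc_of_le_succ {α : Type*} [LinearOrder α] {a b : ℕ → α}
    (hab : ∀ n, a n ≤ b (n + 1)) {x : α} (hx₀ : x ≤ b 0) (hx : ∃ N, b N < x) :
    ∃ n, x ∈ Set.Icc (a n) (b n) := by
  classical
  obtain ⟨n, hn⟩ : ∃ n, Nat.find hx = n + 1 :=
    Nat.exists_eq_succ_of_ne_zero fun h => (Nat.find_spec hx).not_ge (h ▸ hx₀)
  have hlt : b (n + 1) < x := hn ▸ Nat.find_spec hx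
  have hle : x ≤ b n := not_lt.1 (Nat.find_min hx (by omega))
  exact ⟨n, (hab n).trans hlt.le, hle⟩

section Endpoints

variable {p : ℝ}

theorem one_sub_div_natCast_pos (hp : p < 1) (d : ℕ) : 0 < 1 - p / d := by
  rcases d.eq_zero_or_pos with rfl | hd
  · simp
  · have hd₁ : (1 : ℝ) ≤ d := by exact_mod_cast hd
    exact sub_pos.2 ((div_lt_one (by positivity)).2 (by linarith))

theorem one_sub_div_natCast_pow_le_one (hp₀ : 0 ≤ p) (hp₁ : p < 1) (d k : ℕ) :
    (1 - p / d) ^ k ≤ 1 :=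
  pow_le_one₀ (one_sub_div_natCast_pos hp₁ d).le (sub_le_self _ (by positivity))

theorem rightEnd_succ (p : ℝ) (d : ℕ) :
    rightEnd p (d + 1) = (1 / ((d : ℝ) + 1)) * (1 - p / ((d : ℝ) + 1)) ^ d := by
  simp [rightEnd]

theorem rightEnd_one (p : ℝ) : rightEnd p 1 = 1 := by
  simp [rightEnd]

theorem leftEnd_pos (hp : p < 1) (d : ℕ) : 0 < leftEnd p d := by
  have := one_sub_div_natCast_pos hp d
  unfold leftEnd
  positivity

theorem leftEnd_le (hp₀ : 0 ≤ p) (hp₁ : p < 1) (d : ℕ) : leftEnd p d ≤ 1 / ((d : ℝ) + 1) :=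
  mul_le_of_le_one_right (by positivity) (one_sub_div_natCast_pow_le_one hp₀ hp₁ d d)

theorem rightEnd_succ_le (hp₀ : 0 ≤ p) (hp₁ : p < 1) (d : ℕ) :
    rightEnd p (d + 1) ≤ 1 / ((d : ℝ) + 1) := by
  have := one_sub_div_natCast_pow_le_one hp₀ hp₁ (d + 1) d
  rw [rightEnd_succ]
  push_cast at this
  exact mul_le_of_le_one_right (by positivity) this

theorem leftEnd_lt_rightEnd_succ (hp₀ : 0 < p) (hp₁ : p < 1) {d : ℕ} (hd : 1 ≤ d) :
    leftEnd p d < rightEnd p (d + 1) := by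
  have hbase : 1 - p / d < 1 - p / ((d : ℝ) + 1) := by
    gcongr 1 - p / ?_
    linarith
  rw [rightEnd_succ, leftEnd]
  gcongr
  exact (one_sub_div_natCast_pos hp₁ d).le

theorem iUnion_Icc_leftEnd_rightEnd (hp₀ : 0 < p) (hp₁ : p < 1) :
    (⋃ d : ℕ, Set.Icc (leftEnd p (d + 1)) (rightEnd p (d + 1))) = Set.Ioc (0 : ℝ) 1 := by
  ext x
  simp only [Set.mem_iUnion, Set.mem_Ioc]
  constructor
  · rintro ⟨d, hleft, hright⟩
    refine ⟨(leftEnd_pos hp₁ _).trans_le hleft, hright.trans ?_⟩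
    calc rightEnd p (d + 1) ≤ 1 / ((d : ℝ) + 1) := rightEnd_succ_le hp₀.le hp₁ d
      _ ≤ 1 := by rw [div_le_one (by positivity)]; linarith [d.cast_nonneg (α := ℝ)]
  · rintro ⟨hx₀, hx₁⟩
    obtain ⟨N, hN⟩ := exists_nat_one_div_lt hx₀
    refine exists_mem_Icc_of_le_succ (a := fun d => leftEnd p (d + 1))
      (b := fun d => rightEnd p (d + 1))
      (fun n => (leftEnd_lt_rightEnd_succ hp₀ hp₁ n.succ_pos).le)
      (by simpa [rightEnd_one] using hx₁) ⟨N, (rightEnd_succ_le hp₀.le hp₁ N).trans_lt hN⟩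

theorem tendsto_leftEnd_atTop (hp₀ : 0 ≤ p) (hp₁ : p < 1) :
    Tendsto (fun d : ℕ => leftEnd p (d + 1)) atTop (nhds 0) :=
  squeeze_zero (fun _ => (leftEnd_pos hp₁ _).le) (fun d => leftEnd_le hp₀ hp₁ (d + 1))
    (tendsto_one_div_add_atTop_nhds_zero_nat.comp (tendsto_add_atTop_nat 1))

end Endpoints

/-- For `0 < p < 1`, the union over positive integers `d` of the intervals
`[ (1/(d+1))(1-p/d)^d , (1/d)(1-p/d)^(d-1) ]` equals `(0, 1]`; consecutive intervals
overlap, the left endpoints tend to `0`, and the right endpoint for `d = 1` equals `1`. -/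
theorem equilibrium_intervals_cover
    (p : ℝ) (hp0 : 0 < p) (hp1 : p < 1) :
    (⋃ d : ℕ, Set.Icc (leftEnd p (d + 1)) (rightEnd p (d + 1))) = Set.Ioc (0 : ℝ) 1 ∧
    (∀ d : ℕ, 1 ≤ d →
      leftEnd p d < (1 / ((d : ℝ) + 1)) * (1 - p / ((d : ℝ) + 1)) ^ d) ∧
    Tendsto (fun d : ℕ => leftEnd p (d + 1)) atTop (nhds 0) ∧
    rightEnd p 1 = 1 :=
  ⟨iUnion_Icc_leftEnd_rightEnd hp0 hp1,
    fun _ hd => rightEnd_succ p _ ▸ leftEnd_lt_rightEnd_succ hp0 hp1 hd,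
    tendsto_leftEnd_atTop hp0.le hp1, rightEnd_one p⟩
end

section
/- Let u_1 ≤ u_2 ≤ ... ≤ u_n be reals with 0 < a ≤ u_i ≤ b for all i. Then the Gini coefficient Gini(u) = (Σ_{i,j} |u_i - u_j|) / (2n·Σ_i u_i) is at most max over λ ∈ [0,1] of λ(1-λ)(b-a)/(λb + (1-λ)a); i.e., it is maximized (over all such vectors u) by vectors whose entries take only the values a and b. -/
open Finset
open scoped BigOperators

/-!
For `x, y ∈ [a, b]` the two-point inequality
`|x - y| (b - a) ≤ (b - x)(y - a) + (b - y)(x - a)` holds (it is an equality when `x, y ∈ {a, b}`).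
Summing it over all pairs bounds `∑ᵢ ∑ⱼ |uᵢ - uⱼ|` by a function of the mean `m` alone, and the
resulting bound on the Gini coefficient, `(m - a)(b - m) / ((b - a) m)`, is the value of
`λ(1-λ)(b-a)/(λb + (1-λ)a)` at `λ = (m - a) / (b - a)`.
-/

/-- The Gini coefficient of a vector with a fraction `l` of its entries equal to `b` and the
others equal to `a`. -/
noncomputable def giniBound (a b l : ℝ) : ℝ := l * (1 - l) * (b - a) / (l * b + (1 - l) * a)

section giniBound

variable {a b l : ℝ}

lemma giniBound_nonneg (ha : 0 ≤ a) (hab : a ≤ b) (hl : l ∈ Set.Icc 0 1) :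
    0 ≤ giniBound a b l := by
  obtain ⟨hl0, hl1⟩ := hl
  have : 0 ≤ 1 - l := by linarith
  unfold giniBound
  apply div_nonneg
  · have : 0 ≤ b - a := by linarith
    positivity
  · nlinarith

lemma bddAbove_giniBound_image (ha : 0 < a) (hab : a ≤ b) :
    BddAbove (giniBound a b '' Set.Icc 0 1) := by
  refine ⟨(b - a) / a, ?_⟩
  rintro _ ⟨l, ⟨hl0, hl1⟩, rfl⟩
  have hden : a ≤ l * b + (1 - l) * a := by nlinarith
  have hnum : l * (1 - l) * (b - a) ≤ b - a := by nlinarith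
  exact div_le_div₀ (by linarith) hnum ha hden

lemma zero_le_sSup_giniBound_image (ha : 0 ≤ a) (hab : a ≤ b) :
    0 ≤ sSup (giniBound a b '' Set.Icc 0 1) :=
  Real.sSup_nonneg <| by
    rintro _ ⟨l, hl, rfl⟩
    exact giniBound_nonneg ha hab hl

lemma giniBound_div_sub (hab : a < b) (m : ℝ) :
    giniBound a b ((m - a) / (b - a)) = (m - a) * (b - m) / ((b - a) * m) := by
  have hba : b - a ≠ 0 := sub_ne_zero.mpr hab.ne'
  have hden : (m - a) / (b - a) * b + (1 - (m - a) / (b - a)) * a = m := by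
    field_simp; ring
  have hnum : (m - a) / (b - a) * (1 - (m - a) / (b - a)) * (b - a) =
      (m - a) * (b - m) / (b - a) := by
    field_simp; ring
  rw [giniBound, hden, hnum, div_div]

end giniBound

lemma sub_div_sub_mem_Icc_zero_one {a b m : ℝ} (hab : a < b) (hm : m ∈ Set.Icc a b) :
    (m - a) / (b - a) ∈ Set.Icc 0 1 :=
  ⟨div_nonneg (sub_nonneg.2 hm.1) (sub_nonneg.2 hab.le),
    div_le_one_of_le₀ (by linarith [hm.2]) (sub_nonneg.2 hab.le)⟩

lemma abs_sub_mul_sub_le {a b x y : ℝ} (hx : x ∈ Set.Icc a b) (hy : y ∈ Set.Icc a b) :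
    |x - y| * (b - a) ≤ (b - x) * (y - a) + (b - y) * (x - a) := by
  obtain ⟨hxa, hxb⟩ := hx
  obtain ⟨hya, hyb⟩ := hy
  rcases abs_cases (x - y) with ⟨h, _⟩ | ⟨h, _⟩ <;> rw [h] <;> nlinarith

section Fintype

variable {ι : Type*} [Fintype ι] {a b : ℝ} {u : ι → ℝ}

lemma sum_sum_abs_sub_mul_le (hu : ∀ i, u i ∈ Set.Icc a b) :
    (∑ i, ∑ j, |u i - u j|) * (b - a) ≤ 2 * ((∑ i, (b - u i)) * ∑ i, (u i - a)) :=
  calc (∑ i, ∑ j, |u i - u j|) * (b - a)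
      = ∑ i, ∑ j, |u i - u j| * (b - a) := by simp only [sum_mul]
    _ ≤ ∑ i, ∑ j, ((b - u i) * (u j - a) + (b - u j) * (u i - a)) :=
        sum_le_sum fun i _ ↦ sum_le_sum fun j _ ↦ abs_sub_mul_sub_le (hu i) (hu j)
    _ = 2 * ((∑ i, (b - u i)) * ∑ i, (u i - a)) := by
        rw [two_mul, sum_mul_sum]
        simp only [sum_add_distrib]
        exact congrArg _ sum_comm

lemma gini_le_giniBound_expect [Nonempty ι] (ha : 0 < a) (hab : a < b)
    (hu : ∀ i, u i ∈ Set.Icc a b) :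
    (∑ i, ∑ j, |u i - u j|) / (2 * Fintype.card ι * ∑ i, u i) ≤
      giniBound a b ((𝔼 i, u i - a) / (b - a)) := by
  set m := 𝔼 i, u i
  have hn : 0 < (Fintype.card ι : ℝ) := by simp [Fintype.card_pos]
  have hm : 0 < m := ha.trans_le <| le_expect univ_nonempty fun i _ ↦ (hu i).1
  have key := sum_sum_abs_sub_mul_le hu
  simp only [sum_sub_distrib, sum_const, card_univ, nsmul_eq_mul, ← Fintype.card_mul_expect u]
    at key
  rw [giniBound_div_sub hab, ← Fintype.card_mul_expect u,
    div_le_div_iff₀ (by positivity) (by nlinarith)]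
  nlinarith [mul_le_mul_of_nonneg_right key hm.le]

end Fintype

theorem gini_upper_bound_general
    (n : ℕ) (a b : ℝ) (ha : 0 < a) (hab : a ≤ b)
    (u : Fin n → ℝ)
    (hbounds : ∀ i, a ≤ u i ∧ u i ≤ b) :
    (∑ i, ∑ j, |u i - u j|) / (2 * n * ∑ i, u i) ≤
      sSup ((fun l : ℝ => l * (1 - l) * (b - a) / (l * b + (1 - l) * a)) ''
        Set.Icc 0 1) := by
  change _ ≤ sSup (giniBound a b '' Set.Icc 0 1)
  rcases hab.eq_or_lt with rfl | hab
  · have hu : ∀ i, u i = a := fun i ↦ le_antisymm (hbounds i).2 (hbounds i).1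
    simpa [hu] using zero_le_sSup_giniBound_image ha.le le_rfl
  cases isEmpty_or_nonempty (Fin n)
  · simpa using zero_le_sSup_giniBound_image ha.le hab.le
  have hl := sub_div_sub_mem_Icc_zero_one hab
    ⟨le_expect univ_nonempty fun i _ ↦ (hbounds i).1,
      expect_le univ_nonempty fun i _ ↦ (hbounds i).2⟩
  calc _ ≤ giniBound a b ((𝔼 i, u i - a) / (b - a)) := by
        simpa using gini_le_giniBound_expect ha hab hbounds
    _ ≤ _ := le_csSup (bddAbove_giniBound_image ha hab.le) ⟨_, hl, rfl⟩

/-- The Gini coefficient of a nondecreasing vector with entries in `[a,b]`, `a > 0`, is at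
most the maximum over `λ ∈ [0,1]` of `λ(1-λ)(b-a)/(λb + (1-λ)a)`. -/
theorem gini_upper_bound
    (n : ℕ) (hn : 1 ≤ n) (a b : ℝ) (ha : 0 < a) (hab : a ≤ b)
    (u : Fin n → ℝ) (hmono : Monotone u)
    (hbounds : ∀ i, a ≤ u i ∧ u i ≤ b) :
    (∑ i, ∑ j, |u i - u j|) / (2 * n * ∑ i, u i) ≤
      sSup ((fun l : ℝ => l * (1 - l) * (b - a) / (l * b + (1 - l) * a)) ''
        Set.Icc 0 1) :=
  gini_upper_bound_general n a b ha hab u hbounds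
end
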